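/- Let X be an L-embedded Banach space, X** = X ⊕₁ X_s. Let (z_l) be a normalized sequence in X satisfying (1 − 2^{−m}) ∑_{l≥m} |α_l| ≤ ‖∑_{l≥m} α_l z_l‖ ≤ (1 + 2^{−m}) ∑_{l≥m} |α_l| for all m and all (α_l) ∈ ℓ¹ (i.e., (z_l) spans ℓ¹ almost isometrically). Then every weak* accumulation point z_s of (z_l) in X** that lies outside X belongs to X_s and satisfies ‖z_s‖ = 1. -/

import Mathlib

/-!
The lower ℓ¹ estimate on a tail `(z (m + j))ⱼ` lets Hahn–Banach realise any sign pattern on it by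
a functional of norm at most `(1 - 2⁻ᵐ)⁻¹`. Taking the pattern eventually constant, its value at a
weak* cluster point `F` is that constant, which gives
`‖γ • F + ∑ bⱼ z (m + j)‖ ≥ (1 - 2⁻ᵐ) (|γ| + ∑ |bⱼ|)`, and in particular `‖F‖ = 1`.

If `P F = x ≠ 0`, the L-decomposition `‖γ • F + y‖ = ‖γ • x + y‖ + |γ| ‖F - x‖` turns this into an
almost isometric ℓ¹ estimate for `x / ‖x‖` together with the tail, so some `g` equal to `-1` on
`x / ‖x‖` and to `1` on the tail has norm close to `1`. But `F g = 1` and `g x = -‖x‖`, so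
`(F - x) g = 1 + ‖x‖`, whereas `‖F - x‖ ‖g‖` is close to `1 - ‖x‖`.
-/

open Filter Topology NormedSpace

section HahnBanach

variable {X : Type*} [NormedAddCommGroup X] [NormedSpace ℝ X]

theorem exists_dual_eq_of_abs_sum_le {ι : Type*} (w : ι → X) (v : ι → ℝ) {K : ℝ} (hK : 0 ≤ K)
    (h : ∀ (s : Finset ι) (b : ι → ℝ), |∑ i ∈ s, b i * v i| ≤ K * ‖∑ i ∈ s, b i • w i‖) :
    ∃ f : StrongDual ℝ X, ‖f‖ ≤ K ∧ ∀ i, f (w i) = v i := by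
  classical
  let T : (ι →₀ ℝ) →ₗ[ℝ] X := Finsupp.linearCombination ℝ w
  let Λ : (ι →₀ ℝ) →ₗ[ℝ] ℝ := Finsupp.linearCombination ℝ v
  have hΛ (a : ι →₀ ℝ) : |Λ a| ≤ K * ‖T a‖ := by
    simpa [T, Λ, Finsupp.linearCombination_apply, Finsupp.sum, smul_eq_mul] using h a.support a
  have hker : LinearMap.ker T ≤ LinearMap.ker Λ := fun a ha => by
    simpa [LinearMap.mem_ker.1 ha] using hΛ a
  let ψ : LinearMap.range T →ₗ[ℝ] ℝ :=
    (LinearMap.ker T).liftQ Λ hker ∘ₗ T.quotKerEquivRange.symm.toLinearMap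
  have hψ (a : ι →₀ ℝ) : ψ ⟨T a, LinearMap.mem_range_self T a⟩ = Λ a := by
    simp [ψ, LinearMap.quotKerEquivRange_symm_apply_image]
  have hψK (y : LinearMap.range T) : ‖ψ y‖ ≤ K * ‖y‖ := by
    obtain ⟨_, a, rfl⟩ := y
    simpa [hψ] using hΛ a
  obtain ⟨f, hfψ, hf⟩ := exists_extension_norm_eq _ (ψ.mkContinuous K hψK)
  refine ⟨f, hf ▸ ψ.mkContinuous_norm_le hK hψK, fun i => ?_⟩
  have hwi : f (T (Finsupp.single i 1)) = Λ (Finsupp.single i 1) :=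
    (hψ _).symm ▸ hfψ ⟨_, LinearMap.mem_range_self T _⟩
  simpa [T, Λ] using hwi

theorem exists_dual_eq_of_lower_l1_bound {ι : Type*} {w : ι → X} {θ : ℝ} (hθ : 0 < θ)
    (hw : ∀ (s : Finset ι) (b : ι → ℝ), θ * ∑ i ∈ s, |b i| ≤ ‖∑ i ∈ s, b i • w i‖)
    (σ : ι → ℝ) (hσ : ∀ i, |σ i| ≤ 1) :
    ∃ f : StrongDual ℝ X, ‖f‖ ≤ θ⁻¹ ∧ ∀ i, f (w i) = σ i := by
  refine exists_dual_eq_of_abs_sum_le w σ (inv_nonneg.2 hθ.le) fun s b => ?_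
  calc |∑ i ∈ s, b i * σ i| ≤ ∑ i ∈ s, |b i| := by
        refine (Finset.abs_sum_le_sum_abs _ _).trans (Finset.sum_le_sum fun i _ => ?_)
        rw [abs_mul]
        exact mul_le_of_le_one_right (abs_nonneg _) (hσ i)
    _ ≤ θ⁻¹ * ‖∑ i ∈ s, b i • w i‖ := by
        rw [inv_mul_eq_div, le_div_iff₀' hθ]
        exact hw s b

end HahnBanach

theorem sum_option_eq_ite_add {ι M : Type*} [DecidableEq ι] [AddCommMonoid M]
    (s : Finset (Option ι)) (f : Option ι → M) :
    ∑ o ∈ s, f o = (if none ∈ s then f none else 0) + ∑ i ∈ s.eraseNone, f (some i) := by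
  rw [show ∑ i ∈ s.eraseNone, f (some i) = ∑ o ∈ s.erase none, f o by
    rw [← Finset.map_some_eraseNone, Finset.sum_map]; rfl]
  split_ifs with h
  · exact (Finset.add_sum_erase s f h).symm
  · rw [Finset.erase_eq_of_notMem h, zero_add]

theorem lower_l1_bound_option_elim {X ι : Type*} [NormedAddCommGroup X] [NormedSpace ℝ X]
    {x₀ : X} {w : ι → X} {θ : ℝ}
    (h : ∀ (γ : ℝ) (s : Finset ι) (b : ι → ℝ),
      θ * (|γ| + ∑ i ∈ s, |b i|) ≤ ‖γ • x₀ + ∑ i ∈ s, b i • w i‖)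
    (s : Finset (Option ι)) (b : Option ι → ℝ) :
    θ * ∑ o ∈ s, |b o| ≤ ‖∑ o ∈ s, b o • o.elim x₀ w‖ := by
  classical
  have := h (if none ∈ s then b none else 0) s.eraseNone (b ∘ some)
  rw [sum_option_eq_ite_add, sum_option_eq_ite_add]
  split_ifs at this ⊢ <;> simpa using this

theorem abs_sign_le_one (x : ℝ) : |(SignType.sign x : ℝ)| ≤ 1 := by
  rcases lt_trichotomy x 0 with h | h | h <;> simp [h]

section Sequence

variable {X : Type*} [NormedAddCommGroup X] [NormedSpace ℝ X]

def AlmostIsometricL1LowerBound (z : ℕ → X) : Prop :=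
  ∀ (m : ℕ) (s : Finset ℕ) (b : ℕ → ℝ),
    (1 - ((2 : ℝ) ^ m)⁻¹) * ∑ j ∈ s, |b j| ≤ ‖∑ j ∈ s, b j • z (m + j)‖

theorem almostIsometricL1LowerBound_of_tsum {z : ℕ → X}
    (hz : ∀ (m : ℕ) (α : ℕ → ℝ), (∀ l < m, α l = 0) → Summable (fun l => |α l|) →
      (1 - ((2 : ℝ) ^ m)⁻¹) * ∑' l, |α l| ≤ ‖∑' l, α l • z l‖) :
    AlmostIsometricL1LowerBound z := by
  classical
  intro m s b
  set t := s.map (addLeftEmbedding m)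
  set α : ℕ → ℝ := fun l => if l ∈ t then b (l - m) else 0
  have hα (l : ℕ) (hl : l ∉ t) : α l = 0 := if_neg hl
  have hα_lt (l : ℕ) (hl : l < m) : α l = 0 := hα l (by simp [t]; omega)
  have := hz m α hα_lt (summable_of_ne_finset_zero (s := t) fun l hl => by simp [hα l hl])
  rw [tsum_eq_sum (s := t) fun l hl => by simp [hα l hl],
    tsum_eq_sum (s := t) fun l hl => by simp [hα l hl],
    Finset.sum_map, Finset.sum_map] at this
  simpa [α, t, apply_ite] using this

def IsWeakStarClusterPt (F : StrongDual ℝ (StrongDual ℝ X)) (z : ℕ → X) : Prop :=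
  MapClusterPt (StrongDual.toWeakDual F) atTop
    fun l => StrongDual.toWeakDual (inclusionInDoubleDual ℝ X (z l))

namespace IsWeakStarClusterPt

variable {F : StrongDual ℝ (StrongDual ℝ X)} {z : ℕ → X}

theorem apply_mem_of_eventually_mem (hF : IsWeakStarClusterPt F z) (f : StrongDual ℝ X)
    {S : Set ℝ} (hS : IsClosed S) (h : ∀ᶠ l in atTop, f (z l) ∈ S) : F f ∈ S := by
  have hf : MapClusterPt (F f) atTop fun l => f (z l) :=
    hF.continuousAt_comp (WeakDual.eval_continuous f).continuousAt
  exact hS.closure_eq ▸ mem_closure_iff_clusterPt.2 (hf.clusterPt.mono (le_principal_iff.2 h))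

theorem apply_eq_of_eventually_eq (hF : IsWeakStarClusterPt F z) {f : StrongDual ℝ X} {b : ℝ}
    (h : ∀ᶠ l in atTop, f (z l) = b) : F f = b :=
  hF.apply_mem_of_eventually_mem f isClosed_singleton h

theorem norm_le (hF : IsWeakStarClusterPt F z) {C : ℝ} (hC : 0 ≤ C) (hz : ∀ l, ‖z l‖ ≤ C) :
    ‖F‖ ≤ C := by
  refine F.opNorm_le_bound hC fun f => ?_
  have := hF.apply_mem_of_eventually_mem f (S := Metric.closedBall 0 (C * ‖f‖))
    Metric.isClosed_closedBall (Eventually.of_forall fun l => ?_)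
  · simpa [mul_comm] using this
  · simpa [mul_comm] using f.le_opNorm_of_le (hz l)

theorem le_norm_smul_add (hF : IsWeakStarClusterPt F z) (hz : AlmostIsometricL1LowerBound z)
    {m : ℕ} (hm : m ≠ 0) (γ : ℝ) (s : Finset ℕ) (b : ℕ → ℝ) :
    (1 - ((2 : ℝ) ^ m)⁻¹) * (|γ| + ∑ j ∈ s, |b j|) ≤
      ‖γ • F + inclusionInDoubleDual ℝ X (∑ j ∈ s, b j • z (m + j))‖ := by
  classical
  have hθ : 0 < 1 - ((2 : ℝ) ^ m)⁻¹ := sub_pos.2 (inv_lt_one_of_one_lt₀ (one_lt_pow₀ one_lt_two hm))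
  let σ : ℕ → ℝ := fun j => if j ∈ s then SignType.sign (b j) else SignType.sign γ
  obtain ⟨f, hf, hfz⟩ := exists_dual_eq_of_lower_l1_bound hθ (hz m) σ fun j => by
    by_cases hj : j ∈ s <;> simp only [σ, hj, if_true, if_false] <;> exact abs_sign_le_one _
  have hFf : F f = SignType.sign γ := by
    refine hF.apply_eq_of_eventually_eq ?_
    have hs : ∀ᶠ l in atTop, l - m ∉ s :=
      (tendsto_sub_atTop_nat m).eventually (Nat.cofinite_eq_atTop ▸ s.eventually_cofinite_notMem)
    filter_upwards [eventually_ge_atTop m, hs] with l hl hls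
    obtain ⟨j, rfl⟩ := Nat.exists_eq_add_of_le hl
    simp_all [σ]
  have hfY : f (∑ j ∈ s, b j • z (m + j)) = ∑ j ∈ s, |b j| := by
    simp only [map_sum, map_smul, hfz, smul_eq_mul]
    exact Finset.sum_congr rfl fun j hj => by simp [σ, hj, self_mul_sign]
  set G := γ • F + inclusionInDoubleDual ℝ X (∑ j ∈ s, b j • z (m + j))
  have hval : G f = |γ| + ∑ j ∈ s, |b j| := by
    rw [add_apply, smul_apply, dual_def, hFf, hfY, smul_eq_mul, self_mul_sign]
  have hGf : G f ≤ ‖G‖ * (1 - ((2 : ℝ) ^ m)⁻¹)⁻¹ :=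
    (le_abs_self _).trans <| (G.le_opNorm f).trans (mul_le_mul_of_nonneg_left hf (norm_nonneg G))
  rwa [hval, le_mul_inv_iff₀ hθ, mul_comm] at hGf

theorem one_le_norm (hF : IsWeakStarClusterPt F z) (hz : AlmostIsometricL1LowerBound z) :
    1 ≤ ‖F‖ := by
  have hlim : Tendsto (fun m : ℕ => 1 - ((2 : ℝ) ^ m)⁻¹) atTop (𝓝 1) := by
    simpa using (tendsto_inv_atTop_zero.comp
      (tendsto_pow_atTop_atTop_of_one_lt one_lt_two)).const_sub (1 : ℝ)
  refine le_of_tendsto hlim ((eventually_ne_atTop 0).mono fun m hm => ?_)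
  simpa using hF.le_norm_smul_add hz hm 1 ∅ 0

end IsWeakStarClusterPt

end Sequence

section LProjection

variable {X : Type*} [NormedAddCommGroup X] [NormedSpace ℝ X]
  {P : StrongDual ℝ (StrongDual ℝ X) →L[ℝ] StrongDual ℝ (StrongDual ℝ X)}

theorem norm_inclusionInDoubleDual (x : X) : ‖inclusionInDoubleDual ℝ X x‖ = ‖x‖ :=
  (inclusionInDoubleDualLi ℝ).norm_map x

theorem apply_inclusionInDoubleDual_of_range_eq (hproj : ∀ F, P (P F) = P F)
    (hrange : Set.range P = Set.range (inclusionInDoubleDual ℝ X)) (y : X) :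
    P (inclusionInDoubleDual ℝ X y) = inclusionInDoubleDual ℝ X y := by
  obtain ⟨G, hG⟩ : inclusionInDoubleDual ℝ X y ∈ Set.range P := hrange ▸ ⟨y, rfl⟩
  rw [← hG, hproj]

theorem norm_smul_add_inclusionInDoubleDual (hproj : ∀ F, P (P F) = P F)
    (hL : ∀ F, ‖P F‖ + ‖F - P F‖ = ‖F‖)
    (hrange : Set.range P = Set.range (inclusionInDoubleDual ℝ X))
    {F : StrongDual ℝ (StrongDual ℝ X)} {x : X} (hx : inclusionInDoubleDual ℝ X x = P F)
    (γ : ℝ) (y : X) :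
    ‖γ • F + inclusionInDoubleDual ℝ X y‖ = ‖γ • x + y‖ + |γ| * ‖F - P F‖ := by
  have hP : P (γ • F + inclusionInDoubleDual ℝ X y) = inclusionInDoubleDual ℝ X (γ • x + y) := by
    rw [map_add, map_smul, apply_inclusionInDoubleDual_of_range_eq hproj hrange, ← hx, map_add,
      map_smul]
  have hQ : γ • F + inclusionInDoubleDual ℝ X y - P (γ • F + inclusionInDoubleDual ℝ X y) =
      γ • (F - P F) := by
    rw [hP, map_add, map_smul, hx]
    module
  -- instance search does not find `NormSMulClass ℝ` on the bidual, hence the explicit instance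
  rw [← hL (γ • F + inclusionInDoubleDual ℝ X y), hQ, hP,
    @norm_smul _ _ _ _ _ NormedSpace.toNormSMulClass γ (F - P F), Real.norm_eq_abs,
    norm_inclusionInDoubleDual]

namespace IsWeakStarClusterPt

variable {F : StrongDual ℝ (StrongDual ℝ X)} {z : ℕ → X}

theorem le_norm_smul_add_of_lProjection (hF : IsWeakStarClusterPt F z)
    (hz : AlmostIsometricL1LowerBound z) (hproj : ∀ F, P (P F) = P F)
    (hL : ∀ F, ‖P F‖ + ‖F - P F‖ = ‖F‖)
    (hrange : Set.range P = Set.range (inclusionInDoubleDual ℝ X))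
    {x : X} (hx : inclusionInDoubleDual ℝ X x = P F) (hx0 : x ≠ 0)
    (hs : ‖F - P F‖ ≤ 1 - ‖x‖) {m : ℕ} (hm : m ≠ 0) (γ : ℝ) (s : Finset ℕ) (b : ℕ → ℝ) :
    (1 - ((2 : ℝ) ^ m)⁻¹ / ‖x‖) * (|γ| + ∑ j ∈ s, |b j|) ≤
      ‖γ • ‖x‖⁻¹ • x + ∑ j ∈ s, b j • z (m + j)‖ := by
  set c := ‖x‖
  set ε := ((2 : ℝ) ^ m)⁻¹
  set A := ∑ j ∈ s, |b j|
  have hc : 0 < c := norm_pos_iff.2 hx0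
  have hA : 0 ≤ A := Finset.sum_nonneg fun j _ => abs_nonneg _
  have hεA : ε * A ≤ ε / c * A := by
    rw [div_mul_eq_mul_div, le_div_iff₀ hc]
    exact mul_le_of_le_one_right (by positivity) (by linarith [norm_nonneg (F - P F)])
  have key := hF.le_norm_smul_add hz hm (γ * c⁻¹) s b
  rw [norm_smul_add_inclusionInDoubleDual hproj hL hrange hx, ← smul_smul, abs_mul,
    abs_inv, abs_of_pos hc] at key
  have hexp : (1 - ε / c) * (|γ| + A) =
      (1 - ε) * (|γ| * c⁻¹ + A) - |γ| * c⁻¹ * (1 - c) - (ε / c * A - ε * A) := by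
    field_simp
    ring
  nlinarith [mul_le_mul_of_nonneg_left hs (by positivity : 0 ≤ |γ| * c⁻¹)]

theorem lProjection_eq_zero (hF : IsWeakStarClusterPt F z)
    (hz : AlmostIsometricL1LowerBound z) (hproj : ∀ F, P (P F) = P F)
    (hL : ∀ F, ‖P F‖ + ‖F - P F‖ = ‖F‖)
    (hrange : Set.range P = Set.range (inclusionInDoubleDual ℝ X)) (hF1 : ‖F‖ ≤ 1) :
    P F = 0 := by
  obtain ⟨x, hx⟩ : P F ∈ Set.range (inclusionInDoubleDual ℝ X) := hrange ▸ ⟨F, rfl⟩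
  suffices x = 0 by rw [← hx, this, map_zero]
  by_contra hx0
  set c := ‖x‖
  have hc : 0 < c := norm_pos_iff.2 hx0
  have hs : ‖F - P F‖ ≤ 1 - c := by
    linarith [hL F, norm_inclusionInDoubleDual x, congrArg norm hx]
  obtain ⟨m, hεc, hm⟩ : ∃ m : ℕ, ((2 : ℝ) ^ m)⁻¹ < c * c ∧ m ≠ 0 :=
    (((tendsto_inv_atTop_zero.comp (tendsto_pow_atTop_atTop_of_one_lt one_lt_two)).eventually
      (gt_mem_nhds (mul_pos hc hc))).and (eventually_ne_atTop 0)).exists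
  set ε := ((2 : ℝ) ^ m)⁻¹
  have hεc' : ε / c < c := (div_lt_iff₀ hc).2 hεc
  have hc1 : c ≤ 1 := by linarith [norm_nonneg (F - P F)]
  have hθ : 0 < 1 - ε / c := by linarith
  -- `g` is `-1` on the unit vector `x / ‖x‖` and `1` on the tail `z (m + j)`
  have hlow := hF.le_norm_smul_add_of_lProjection hz hproj hL hrange hx hx0 hs hm
  obtain ⟨g, hg, hgσ⟩ := exists_dual_eq_of_lower_l1_bound hθ (lower_l1_bound_option_elim hlow)
    (fun o => o.elim (-1) fun _ => 1) (by rintro (_ | _) <;> simp)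
  have hgx : g x = -c := by
    have := hgσ none
    simp only [Option.elim, map_smul, smul_eq_mul] at this
    field_simp at this
    linarith
  have hFg : F g = 1 := hF.apply_eq_of_eventually_eq <| (eventually_ge_atTop m).mono fun l hl => by
    obtain ⟨j, rfl⟩ := Nat.exists_eq_add_of_le hl
    exact hgσ (some j)
  have hsep : 1 + c ≤ (1 - c) * (1 - ε / c)⁻¹ :=
    calc 1 + c = (F - P F) g := by rw [sub_apply, hFg, ← hx, dual_def, hgx]; ring
      _ ≤ ‖F - P F‖ * ‖g‖ := (le_abs_self _).trans ((F - P F).le_opNorm g)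
      _ ≤ (1 - c) * (1 - ε / c)⁻¹ := mul_le_mul hs hg (norm_nonneg g) (by linarith)
  rw [le_mul_inv_iff₀ hθ] at hsep
  nlinarith [mul_div_cancel₀ ε hc.ne']

end IsWeakStarClusterPt

end LProjection

theorem stmt11_general {X : Type*} [NormedAddCommGroup X] [NormedSpace ℝ X]
    (P : StrongDual ℝ (StrongDual ℝ X) →L[ℝ] StrongDual ℝ (StrongDual ℝ X))
    (hproj : ∀ F, P (P F) = P F)
    (hL : ∀ F, ‖P F‖ + ‖F - P F‖ = ‖F‖)
    (hrange : Set.range P = Set.range (inclusionInDoubleDual ℝ X))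
    (z : ℕ → X) (hznorm : ∀ l, ‖z l‖ = 1)
    (hz : ∀ (m : ℕ) (α : ℕ → ℝ), (∀ l < m, α l = 0) → Summable (fun l => |α l|) →
      (1 - ((2 : ℝ) ^ m)⁻¹) * ∑' l, |α l| ≤ ‖∑' l, α l • z l‖ ∧
      ‖∑' l, α l • z l‖ ≤ (1 + ((2 : ℝ) ^ m)⁻¹) * ∑' l, |α l|)
    (zs : StrongDual ℝ (StrongDual ℝ X))
    (hcluster : MapClusterPt (StrongDual.toWeakDual zs) atTop
      (fun l => StrongDual.toWeakDual (inclusionInDoubleDual ℝ X (z l)))) :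
    P zs = 0 ∧ ‖zs‖ = 1 := by
  have hF : IsWeakStarClusterPt zs z := hcluster
  have hlow : AlmostIsometricL1LowerBound z :=
    almostIsometricL1LowerBound_of_tsum fun m α hα hsum => (hz m α hα hsum).1
  have hle : ‖zs‖ ≤ 1 := hF.norm_le zero_le_one fun l => (hznorm l).le
  exact ⟨hF.lProjection_eq_zero hlow hproj hL hrange hle, le_antisymm hle (hF.one_le_norm hlow)⟩

theorem stmt11 {X : Type*} [NormedAddCommGroup X] [NormedSpace ℝ X] [CompleteSpace X]
    (P : StrongDual ℝ (StrongDual ℝ X) →L[ℝ] StrongDual ℝ (StrongDual ℝ X))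
    (hproj : ∀ F, P (P F) = P F)
    (hL : ∀ F, ‖P F‖ + ‖F - P F‖ = ‖F‖)
    (hrange : Set.range P = Set.range (inclusionInDoubleDual ℝ X))
    (z : ℕ → X) (hznorm : ∀ l, ‖z l‖ = 1)
    (hz : ∀ (m : ℕ) (α : ℕ → ℝ), (∀ l < m, α l = 0) → Summable (fun l => |α l|) →
      (1 - ((2 : ℝ) ^ m)⁻¹) * ∑' l, |α l| ≤ ‖∑' l, α l • z l‖ ∧
      ‖∑' l, α l • z l‖ ≤ (1 + ((2 : ℝ) ^ m)⁻¹) * ∑' l, |α l|)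
    (zs : StrongDual ℝ (StrongDual ℝ X))
    (hcluster : MapClusterPt (StrongDual.toWeakDual zs) atTop
      (fun l => StrongDual.toWeakDual (inclusionInDoubleDual ℝ X (z l))))
    (hout : ∀ x : X, inclusionInDoubleDual ℝ X x ≠ zs) :
    P zs = 0 ∧ ‖zs‖ = 1 :=
  stmt11_general P hproj hL hrange z hznorm hz zs hcluster
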